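/- Let H be a real Hilbert space, let Ψ : ℝ₊ × H → ℝ ∪ {+∞} be such that Ψ(t,·) is proper lsc convex for each t ≥ 0, and let F : ℝ₊ → H, u(t) := prox_{Ψ(t,·)}(F(t)). Assume: (i) F is differentiable at t = 0; (ii) Ψ is twice epi-differentiable at u(0) for F(0) − u(0) ∈ ∂Ψ(0,·)(u(0)); (iii) D_e²Ψ(u(0)|F(0) − u(0)) is proper. Then u is differentiable at t = 0 and u'(0) = prox_{D_e²Ψ(u(0)|F(0)−u(0))}(F'(0)). -/

import Mathlib

open Filter Topology
open scoped RealInnerProductSpace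

/-- `p` is a proximal point of `ψ` at `x`, i.e. `p` minimizes `y ↦ ψ y + (1/2)‖y - x‖²`. -/
def IsProxPt {H : Type*} [NormedAddCommGroup H] [InnerProductSpace ℝ H]
    (ψ : H → EReal) (x p : H) : Prop :=
  ∀ y : H, ψ p + ((‖p - x‖ ^ 2 / 2 : ℝ) : EReal) ≤ ψ y + ((‖y - x‖ ^ 2 / 2 : ℝ) : EReal)

/-- Second-order difference quotient of the parameterized family `Ψ` at `x` for `y`:
`Δ_t²Ψ(x|y)(z) = (Ψ(t, x + tz) - Ψ(t, x) - t⟨y, z⟩)/t²` (where `Ψ(t, x)` is real). -/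
noncomputable def secondQuot {H : Type*} [NormedAddCommGroup H] [InnerProductSpace ℝ H]
    (Ψ : ℝ → H → EReal) (x y : H) (t : ℝ) (z : H) : EReal :=
  Ψ t (x + t • z) * (((1 : ℝ) / t ^ 2 : ℝ) : EReal) +
    (((-(Ψ t x).toReal - t * ⟪y, z⟫) / t ^ 2 : ℝ) : EReal)

lemma exists_weak_subseq {H : Type*} [NormedAddCommGroup H] [InnerProductSpace ℝ H]
    [CompleteSpace H] (z : ℕ → H) (M : ℝ) (hb : ∀ n, ‖z n‖ ≤ M) :
    ∃ φ : ℕ → ℕ, StrictMono φ ∧ ∃ zb : H,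
      ∀ w : H, Tendsto (fun k => (⟪z (φ k), w⟫ : ℝ)) atTop (𝓝 ⟪zb, w⟫) := by
  have hM0 : 0 ≤ M := le_trans (norm_nonneg _) (hb 0)
  set K : Submodule ℝ H := (Submodule.span ℝ (Set.range z)).topologicalClosure with hK
  haveI : CompleteSpace K :=
    (Submodule.span ℝ (Set.range z)).isClosed_topologicalClosure.completeSpace_coe
  have hzK : ∀ n, z n ∈ K :=
    fun n => Submodule.le_topologicalClosure _ (Submodule.subset_span ⟨n, rfl⟩)
  have hsep : TopologicalSpace.IsSeparable (K : Set H) := by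
    have h1 : TopologicalSpace.IsSeparable
        ((Submodule.span ℝ (Set.range z) : Submodule ℝ H) : Set H) :=
      (Set.countable_range z).isSeparable.span
    have := h1.closure
    rwa [hK, Submodule.topologicalClosure_coe]
  obtain ⟨T, Tcount, hT⟩ := hsep
  have hTne : (insert (0 : H) T).Nonempty := ⟨0, Set.mem_insert _ _⟩
  obtain ⟨d, hd⟩ := (Tcount.insert 0).exists_eq_range hTne
  have hKd : (K : Set H) ⊆ closure (Set.range d) := by
    rw [← hd]
    exact hT.trans (closure_mono (Set.subset_insert _ _))
  -- diagonal extraction on the countable family d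
  set g : ℕ → (ℕ → ℝ) := fun n m => ⟪z n, d m⟫ with hg
  set s : Set (ℕ → ℝ) := Set.univ.pi fun m => Set.Icc (-(M * ‖d m‖)) (M * ‖d m‖) with hs
  have hcs : IsCompact s := isCompact_univ_pi fun m => isCompact_Icc
  have hgs : ∀ n, g n ∈ s := by
    intro n
    rw [hs, Set.mem_univ_pi]
    intro m
    have h1 : |(⟪z n, d m⟫ : ℝ)| ≤ M * ‖d m‖ := by
      refine (abs_real_inner_le_norm _ _).trans ?_
      exact mul_le_mul_of_nonneg_right (hb n) (norm_nonneg _)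
    exact abs_le.mp h1
  obtain ⟨l, _, φ, hφ, hconv⟩ := hcs.tendsto_subseq hgs
  have hpt : ∀ m, Tendsto (fun k => (⟪z (φ k), d m⟫ : ℝ)) atTop (𝓝 (l m)) := by
    intro m
    have := tendsto_pi_nhds.mp hconv m
    simpa [hg, Function.comp] using this
  refine ⟨φ, hφ, ?_⟩
  -- every inner product sequence converges
  have hcauchy : ∀ w : H, ∃ L : ℝ, Tendsto (fun k => (⟪z (φ k), w⟫ : ℝ)) atTop (𝓝 L) := by
    intro w
    set y : H := (K.orthogonalProjectionOnto w : H) with hy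
    have hyw : ∀ n, (⟪z n, w⟫ : ℝ) = ⟪z n, y⟫ := by
      intro n
      have h0 : (⟪w - y, z n⟫ : ℝ) = 0 := by
        rw [hy]; exact K.starProjection_inner_eq_zero w (z n) (hzK n)
      have h1 : (⟪z n, w - y⟫ : ℝ) = ⟪w - y, z n⟫ := real_inner_comm _ _
      have h2 : (⟪z n, w - y⟫ : ℝ) = ⟪z n, w⟫ - ⟪z n, y⟫ := inner_sub_right _ _ _
      linarith
    have hyK : y ∈ closure (Set.range d) := by
      refine hKd ?_
      rw [hy]; exact Submodule.coe_mem _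
    have hC : CauchySeq (fun k => (⟪z (φ k), y⟫ : ℝ)) := by
      rw [Metric.cauchySeq_iff]
      intro ε hε
      obtain ⟨p, hp, hpd⟩ := Metric.mem_closure_iff.mp hyK (ε / (4 * (M + 1)))
        (by positivity)
      obtain ⟨m, hm⟩ := hp
      have hclose : ∀ k, |(⟪z (φ k), y⟫ : ℝ) - ⟪z (φ k), d m⟫| ≤ ε / 4 := by
        intro k
        have h1 : (⟪z (φ k), y⟫ : ℝ) - ⟪z (φ k), d m⟫ = ⟪z (φ k), y - d m⟫ := by
          rw [inner_sub_right]
        rw [h1]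
        refine (abs_real_inner_le_norm _ _).trans ?_
        have h2 : ‖y - d m‖ ≤ ε / (4 * (M + 1)) := by
          have h3 : dist y (d m) < ε / (4 * (M + 1)) := by rw [hm]; exact hpd
          rw [dist_eq_norm] at h3
          linarith
        calc ‖z (φ k)‖ * ‖y - d m‖ ≤ M * (ε / (4 * (M + 1))) := by
              apply mul_le_mul (hb _) h2 (norm_nonneg _) hM0
          _ ≤ ε / 4 := by
              rw [mul_div_assoc', div_le_div_iff₀ (by positivity) (by norm_num)]
              nlinarith
      have hCb : CauchySeq (fun k => (⟪z (φ k), d m⟫ : ℝ)) := (hpt m).cauchySeq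
      rw [Metric.cauchySeq_iff] at hCb
      obtain ⟨N, hN⟩ := hCb (ε / 4) (by positivity)
      refine ⟨N, fun j hj i hi => ?_⟩
      have h1 := hclose j
      have h2 := hclose i
      have h3 := hN j hj i hi
      rw [Real.dist_eq] at h3 ⊢
      have := abs_sub_abs_le_abs_sub ((⟪z (φ j), y⟫:ℝ)) ((⟪z (φ i), y⟫:ℝ))
      calc |(⟪z (φ j), y⟫:ℝ) - ⟪z (φ i), y⟫|
          ≤ |(⟪z (φ j), y⟫:ℝ) - ⟪z (φ j), d m⟫| + |(⟪z (φ j), d m⟫:ℝ) - ⟪z (φ i), d m⟫|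
            + |(⟪z (φ i), d m⟫:ℝ) - ⟪z (φ i), y⟫| := by
            have := abs_sub_le ((⟪z (φ j), y⟫:ℝ)) ((⟪z (φ j), d m⟫:ℝ)) ((⟪z (φ i), y⟫:ℝ))
            have h4 := abs_sub_le ((⟪z (φ j), d m⟫:ℝ)) ((⟪z (φ i), d m⟫:ℝ)) ((⟪z (φ i), y⟫:ℝ))
            linarith
        _ < ε := by
            have h5 : |(⟪z (φ i), d m⟫:ℝ) - ⟪z (φ i), y⟫| ≤ ε / 4 := by
              rw [abs_sub_comm]; exact h2
            linarith
    obtain ⟨L, hL⟩ := cauchySeq_tendsto_of_complete hC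
    exact ⟨L, by simpa only [hyw] using hL⟩
  choose f hf using hcauchy
  -- f is a bounded linear functional
  have hadd : ∀ w w', f (w + w') = f w + f w' := by
    intro w w'
    refine tendsto_nhds_unique ?_ ((hf w).add (hf w'))
    have : (fun k => (⟪z (φ k), w + w'⟫ : ℝ)) =
        fun k => (⟪z (φ k), w⟫ : ℝ) + ⟪z (φ k), w'⟫ := by
      funext k; exact inner_add_right _ _ _
    rw [← this]; exact hf _
  have hsmul : ∀ (c : ℝ) w, f (c • w) = c * f w := by
    intro c w
    refine tendsto_nhds_unique ?_ ((hf w).const_mul c)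
    have : (fun k => (⟪z (φ k), c • w⟫ : ℝ)) = fun k => c * ⟪z (φ k), w⟫ := by
      funext k; exact real_inner_smul_right _ _ _
    rw [← this]; exact hf _
  have hbound : ∀ w, ‖f w‖ ≤ M * ‖w‖ := by
    intro w
    have h1 : Tendsto (fun k => |(⟪z (φ k), w⟫ : ℝ)|) atTop (𝓝 |f w|) := (hf w).abs
    have h2 : ∀ k, |(⟪z (φ k), w⟫ : ℝ)| ≤ M * ‖w‖ := fun k =>
      (abs_real_inner_le_norm _ _).trans
        (mul_le_mul_of_nonneg_right (hb _) (norm_nonneg _))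
    have := le_of_tendsto h1 (Filter.Eventually.of_forall h2)
    simpa [Real.norm_eq_abs] using this
  set Flin : H →ₗ[ℝ] ℝ :=
    { toFun := f, map_add' := hadd, map_smul' := hsmul } with hFlin
  set Fc : H →L[ℝ] ℝ := Flin.mkContinuous M hbound with hFc
  refine ⟨(InnerProductSpace.toDual ℝ H).symm Fc, fun w => ?_⟩
  have : (⟪(InnerProductSpace.toDual ℝ H).symm Fc, w⟫ : ℝ) = Fc w :=
    InnerProductSpace.toDual_symm_apply
  rw [this]
  exact hf w
section Quot

variable {H : Type*} [NormedAddCommGroup H] [InnerProductSpace ℝ H]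
  (Ψ : ℝ → H → EReal) (x0 y0 : H) (t : ℝ)

lemma quot_top {w : H} (ht : 0 < t) (h : Ψ t (x0 + t • w) = ⊤) :
    secondQuot Ψ x0 y0 t w = ⊤ := by
  rw [secondQuot, h, EReal.top_mul_of_pos, EReal.top_add_coe]
  exact_mod_cast EReal.coe_pos.2 (by positivity : (0:ℝ) < 1 / t ^ 2)

lemma quot_coe {w : H} {r : ℝ} (h : Ψ t (x0 + t • w) = (r : ℝ)) :
    secondQuot Ψ x0 y0 t w = (((r - (Ψ t x0).toReal - t * ⟪y0, w⟫) / t ^ 2 : ℝ) : EReal) := by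
  rw [secondQuot, h, ← EReal.coe_mul, ← EReal.coe_add]
  exact EReal.coe_eq_coe_iff.2 (by ring)

lemma quot_ne_bot {w : H} (ht : 0 < t) (hnb : Ψ t (x0 + t • w) ≠ ⊥) :
    secondQuot Ψ x0 y0 t w ≠ ⊥ := by
  rcases eq_or_ne (Ψ t (x0 + t • w)) ⊤ with h | h
  · rw [quot_top Ψ x0 y0 t ht h]; simp
  · rw [quot_coe Ψ x0 y0 t (EReal.coe_toReal h hnb).symm]; simp

lemma quot_zero (ht : 0 < t) (hx0t : Ψ t x0 ≠ ⊤) (hx0b : Ψ t x0 ≠ ⊥) :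
    secondQuot Ψ x0 y0 t 0 = 0 := by
  have h : Ψ t (x0 + t • (0 : H)) = (((Ψ t x0).toReal : ℝ) : EReal) := by
    rw [smul_zero, add_zero, EReal.coe_toReal hx0t hx0b]
  rw [quot_coe Ψ x0 y0 t h]
  norm_num

lemma quot_conv_real (ht : 0 < t)
    (hconv : ∀ u v : H, ∀ a b : ℝ, 0 ≤ a → 0 ≤ b → a + b = 1 →
      Ψ t (a • u + b • v) ≤ (a : EReal) * Ψ t u + (b : EReal) * Ψ t v)
    (hnb : ∀ z, Ψ t z ≠ ⊥)
    {w1 w2 : H} {r1 r2 a b : ℝ} (h1 : secondQuot Ψ x0 y0 t w1 = (r1 : ℝ))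
    (h2 : secondQuot Ψ x0 y0 t w2 = (r2 : ℝ)) (ha : 0 ≤ a) (hb : 0 ≤ b) (hab : a + b = 1) :
    secondQuot Ψ x0 y0 t (a • w1 + b • w2) ≤ ((a * r1 + b * r2 : ℝ) : EReal) := by
  have ht2 : (0:ℝ) < t ^ 2 := by positivity
  -- the two values of Ψ are finite
  have hw1t : Ψ t (x0 + t • w1) ≠ ⊤ := by
    intro h; rw [quot_top Ψ x0 y0 t ht h] at h1; exact (EReal.top_ne_coe r1) h1
  have hw2t : Ψ t (x0 + t • w2) ≠ ⊤ := by
    intro h; rw [quot_top Ψ x0 y0 t ht h] at h2; exact (EReal.top_ne_coe r2) h2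
  set s1 := (Ψ t (x0 + t • w1)).toReal with hs1
  set s2 := (Ψ t (x0 + t • w2)).toReal with hs2
  have hc1 : Ψ t (x0 + t • w1) = (s1 : EReal) := (EReal.coe_toReal hw1t (hnb _)).symm
  have hc2 : Ψ t (x0 + t • w2) = (s2 : EReal) := (EReal.coe_toReal hw2t (hnb _)).symm
  set r0 := (Ψ t x0).toReal with hr0
  have hr1 : r1 = (s1 - r0 - t * ⟪y0, w1⟫) / t ^ 2 := by
    have := (quot_coe Ψ x0 y0 t hc1).symm.trans h1
    exact (EReal.coe_eq_coe_iff.1 this).symm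
  have hr2 : r2 = (s2 - r0 - t * ⟪y0, w2⟫) / t ^ 2 := by
    have := (quot_coe Ψ x0 y0 t hc2).symm.trans h2
    exact (EReal.coe_eq_coe_iff.1 this).symm
  have hcombo : x0 + t • (a • w1 + b • w2) = a • (x0 + t • w1) + b • (x0 + t • w2) := by
    have hx : a • x0 + b • x0 = x0 := by rw [← add_smul, hab, one_smul]
    rw [smul_add t, smul_add a, smul_add b, smul_comm t a, smul_comm t b]
    conv_lhs => rw [← hx]
    abel
  have hΨc : Ψ t (x0 + t • (a • w1 + b • w2)) ≤ ((a * s1 + b * s2 : ℝ) : EReal) := by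
    calc Ψ t (x0 + t • (a • w1 + b • w2))
        = Ψ t (a • (x0 + t • w1) + b • (x0 + t • w2)) := by rw [hcombo]
      _ ≤ (a : EReal) * Ψ t (x0 + t • w1) + (b : EReal) * Ψ t (x0 + t • w2) :=
          hconv _ _ a b ha hb hab
      _ = ((a * s1 + b * s2 : ℝ) : EReal) := by
          rw [hc1, hc2, ← EReal.coe_mul, ← EReal.coe_mul, ← EReal.coe_add]
  have hct : Ψ t (x0 + t • (a • w1 + b • w2)) ≠ ⊤ :=
    (hΨc.trans_lt (EReal.coe_lt_top _)).ne
  set s := (Ψ t (x0 + t • (a • w1 + b • w2))).toReal with hss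
  have hcs : Ψ t (x0 + t • (a • w1 + b • w2)) = (s : EReal) :=
    (EReal.coe_toReal hct (hnb _)).symm
  have hsle : s ≤ a * s1 + b * s2 := by
    rw [hcs] at hΨc; exact_mod_cast hΨc
  rw [quot_coe Ψ x0 y0 t hcs]
  rw [EReal.coe_le_coe_iff]
  have hinner : (⟪y0, a • w1 + b • w2⟫ : ℝ) = a * ⟪y0, w1⟫ + b * ⟪y0, w2⟫ := by
    rw [inner_add_right, real_inner_smul_right, real_inner_smul_right]
  rw [hinner, hr1, hr2, div_le_iff₀ ht2]
  have e1 : a * ((s1 - r0 - t * ⟪y0, w1⟫) / t ^ 2) * t ^ 2 = a * (s1 - r0 - t * ⟪y0, w1⟫) := by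
    field_simp
  have e2 : b * ((s2 - r0 - t * ⟪y0, w2⟫) / t ^ 2) * t ^ 2 = b * (s2 - r0 - t * ⟪y0, w2⟫) := by
    field_simp
  rw [add_mul, e1, e2, ← hr0]
  have hr0ab : a * r0 + b * r0 = r0 := by rw [← add_mul, hab, one_mul]
  nlinarith [hsle, hr0ab]

end Quot

section Quot2
variable {H : Type*} [NormedAddCommGroup H] [InnerProductSpace ℝ H]
  (Ψ : ℝ → H → EReal) (x0 y0 : H) (t : ℝ)

lemma prox_quot (ht : 0 < t) (hnb : ∀ z, Ψ t z ≠ ⊥) (hx0t : Ψ t x0 ≠ ⊤)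
    {Ft F0 ut : H} (hy0 : y0 = F0 - x0) (hprox : IsProxPt (Ψ t) Ft ut) :
    IsProxPt (secondQuot Ψ x0 y0 t) (t⁻¹ • (Ft - F0)) (t⁻¹ • (ut - x0)) := by
  have ht2 : (0:ℝ) < t ^ 2 := by positivity
  set v := t⁻¹ • (Ft - F0) with hvdef
  set zt := t⁻¹ • (ut - x0) with hztdef
  have hv : t • v = Ft - F0 := smul_inv_smul₀ ht.ne' _
  have hz : t • zt = ut - x0 := smul_inv_smul₀ ht.ne' _
  have hut : x0 + t • zt = ut := by rw [hz]; abel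
  set r0 := (Ψ t x0).toReal with hr0def
  have hx0c : Ψ t x0 = (r0 : EReal) := (EReal.coe_toReal hx0t (hnb _)).symm
  have hutt : Ψ t ut ≠ ⊤ := by
    intro h
    have h1 := hprox x0
    rw [h, EReal.top_add_coe, hx0c, ← EReal.coe_add] at h1
    exact (EReal.coe_lt_top _).not_ge h1
  set s := (Ψ t ut).toReal with hsdef
  have hsc : Ψ t ut = (s : EReal) := (EReal.coe_toReal hutt (hnb _)).symm
  intro w
  rcases eq_or_ne (Ψ t (x0 + t • w)) ⊤ with hw | hw
  · rw [quot_top Ψ x0 y0 t ht hw, EReal.top_add_coe]; exact le_top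
  · set r := (Ψ t (x0 + t • w)).toReal with hrdef
    have hrc : Ψ t (x0 + t • w) = (r : EReal) := (EReal.coe_toReal hw (hnb _)).symm
    have hzc : Ψ t (x0 + t • zt) = (s : EReal) := by rw [hut]; exact hsc
    rw [quot_coe Ψ x0 y0 t hrc, quot_coe Ψ x0 y0 t hzc,
      ← EReal.coe_add, ← EReal.coe_add, EReal.coe_le_coe_iff]
    -- the original inequality, in real form
    have hgiven : s + ‖ut - Ft‖ ^ 2 / 2 ≤ r + ‖x0 + t • w - Ft‖ ^ 2 / 2 := by
      have h1 := hprox (x0 + t • w)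
      rw [hsc, hrc, ← EReal.coe_add, ← EReal.coe_add, EReal.coe_le_coe_iff] at h1
      exact h1
    have key1 : ut - Ft = t • (zt - v) + (x0 - F0) := by
      rw [smul_sub, hv, ← hut]; abel
    have key2 : x0 + t • w - Ft = t • (w - v) + (x0 - F0) := by
      rw [smul_sub, hv]; abel
    have n1 : ‖ut - Ft‖ ^ 2
        = t ^ 2 * ‖zt - v‖ ^ 2 + 2 * (t * ⟪zt - v, x0 - F0⟫) + ‖x0 - F0‖ ^ 2 := by
      rw [key1, norm_add_sq_real, real_inner_smul_left, norm_smul]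
      rw [Real.norm_eq_abs, abs_of_pos ht]; ring
    have n2 : ‖x0 + t • w - Ft‖ ^ 2
        = t ^ 2 * ‖w - v‖ ^ 2 + 2 * (t * ⟪w - v, x0 - F0⟫) + ‖x0 - F0‖ ^ 2 := by
      rw [key2, norm_add_sq_real, real_inner_smul_left, norm_smul]
      rw [Real.norm_eq_abs, abs_of_pos ht]; ring
    have i1 : (⟪zt - v, x0 - F0⟫ : ℝ) = -⟪y0, zt⟫ + ⟪y0, v⟫ := by
      have : x0 - F0 = -y0 := by rw [hy0]; abel
      rw [this, inner_neg_right, inner_sub_left, real_inner_comm zt y0, real_inner_comm v y0]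
      ring
    have i2 : (⟪w - v, x0 - F0⟫ : ℝ) = -⟪y0, w⟫ + ⟪y0, v⟫ := by
      have : x0 - F0 = -y0 := by rw [hy0]; abel
      rw [this, inner_neg_right, inner_sub_left, real_inner_comm w y0, real_inner_comm v y0]
      ring
    have expand : ∀ X q : ℝ, X / t ^ 2 + q = (X + t ^ 2 * q) / t ^ 2 := by
      intro X q; field_simp
    rw [expand, expand, div_le_div_iff₀ ht2 ht2]
    have hgle : s - r0 - t * ⟪y0, zt⟫ + t ^ 2 * (‖zt - v‖ ^ 2 / 2)
        ≤ r - r0 - t * ⟪y0, w⟫ + t ^ 2 * (‖w - v‖ ^ 2 / 2) := by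
      rw [n1, n2, i1, i2] at hgiven
      linarith
    exact mul_le_mul_of_nonneg_right hgle ht2.le

lemma prox_strong (ht : 0 < t)
    (hconv : ∀ u v : H, ∀ a b : ℝ, 0 ≤ a → 0 ≤ b → a + b = 1 →
      Ψ t (a • u + b • v) ≤ (a : EReal) * Ψ t u + (b : EReal) * Ψ t v)
    (hnb : ∀ z, Ψ t z ≠ ⊥)
    {v z : H} (hpz : IsProxPt (secondQuot Ψ x0 y0 t) v z)
    {rz : ℝ} (hz : secondQuot Ψ x0 y0 t z = (rz : ℝ)) (w : H) :
    ((rz + ‖z - v‖ ^ 2 / 2 + ‖w - z‖ ^ 2 / 4 : ℝ) : EReal)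
      ≤ secondQuot Ψ x0 y0 t w + ((‖w - v‖ ^ 2 / 2 : ℝ) : EReal) := by
  rcases eq_or_ne (secondQuot Ψ x0 y0 t w) ⊤ with hw | hw
  · rw [hw, EReal.top_add_coe]; exact le_top
  · have hwb : secondQuot Ψ x0 y0 t w ≠ ⊥ := quot_ne_bot Ψ x0 y0 t ht (hnb _)
    set r := (secondQuot Ψ x0 y0 t w).toReal with hrdef
    have hrc : secondQuot Ψ x0 y0 t w = (r : EReal) := (EReal.coe_toReal hw hwb).symm
    have hmid : secondQuot Ψ x0 y0 t ((1/2 : ℝ) • z + (1/2 : ℝ) • w)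
        ≤ ((1/2 * rz + 1/2 * r : ℝ) : EReal) :=
      quot_conv_real Ψ x0 y0 t ht hconv hnb hz hrc (by norm_num) (by norm_num) (by norm_num)
    have h1 := hpz ((1/2 : ℝ) • z + (1/2 : ℝ) • w)
    rw [hz] at h1
    have h2 : ((rz : ℝ) : EReal) + ((‖z - v‖ ^ 2 / 2 : ℝ) : EReal)
        ≤ ((1/2 * rz + 1/2 * r + ‖(1/2 : ℝ) • z + (1/2 : ℝ) • w - v‖ ^ 2 / 2 : ℝ) : EReal) := by
      refine h1.trans ?_
      calc secondQuot Ψ x0 y0 t ((1/2 : ℝ) • z + (1/2 : ℝ) • w)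
            + ((‖(1/2 : ℝ) • z + (1/2 : ℝ) • w - v‖ ^ 2 / 2 : ℝ) : EReal)
          ≤ ((1/2 * rz + 1/2 * r : ℝ) : EReal)
            + ((‖(1/2 : ℝ) • z + (1/2 : ℝ) • w - v‖ ^ 2 / 2 : ℝ) : EReal) :=
            add_le_add_left hmid _
        _ = _ := by rw [← EReal.coe_add]
    rw [← EReal.coe_add, EReal.coe_le_coe_iff] at h2
    rw [hrc, ← EReal.coe_add, EReal.coe_le_coe_iff]
    -- parallelogram computation
    have emid : (1/2 : ℝ) • z + (1/2 : ℝ) • w - v = (1/2 : ℝ) • ((z - v) + (w - v)) := by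
      rw [smul_add, smul_sub, smul_sub]
      have : (1/2 : ℝ) • v + (1/2 : ℝ) • v = v := by
        rw [← add_smul]; norm_num
      conv_lhs => rw [show v = (1/2 : ℝ) • v + (1/2 : ℝ) • v from this.symm]
      abel
    have n1 : ‖(1/2 : ℝ) • z + (1/2 : ℝ) • w - v‖ ^ 2
        = (1/4) * (‖z - v‖ ^ 2 + 2 * ⟪z - v, w - v⟫ + ‖w - v‖ ^ 2) := by
      rw [emid, norm_smul, Real.norm_eq_abs, mul_pow, norm_add_sq_real]
      norm_num
    have n2 : ‖w - z‖ ^ 2 = ‖w - v‖ ^ 2 - 2 * ⟪z - v, w - v⟫ + ‖z - v‖ ^ 2 := by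
      have : w - z = (w - v) - (z - v) := by abel
      rw [this, norm_sub_sq_real, real_inner_comm]
    nlinarith [h2, n1, n2]

end Quot2

-- ### EReal helpers

lemma ereal_le_coe_of_forall_eps {x : EReal} {s : ℝ}
    (h : ∀ ε : ℝ, 0 < ε → x ≤ ((s + ε : ℝ) : EReal)) : x ≤ (s : EReal) := by
  rcases eq_or_ne x ⊥ with hx | hx
  · simp [hx]
  rcases eq_or_ne x ⊤ with hx' | hx'
  · exact absurd (hx' ▸ h 1 one_pos) (EReal.coe_lt_top _).not_ge
  · obtain ⟨xr, rfl⟩ : ∃ xr : ℝ, x = (xr : EReal) :=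
      ⟨x.toReal, (EReal.coe_toReal hx' hx).symm⟩
    rw [EReal.coe_le_coe_iff]
    refine le_of_forall_pos_le_add fun ε hε => ?_
    exact EReal.coe_le_coe_iff.1 (h ε hε)

-- ### The core sequential argument

lemma seq_core {H : Type*} [NormedAddCommGroup H] [InnerProductSpace ℝ H] [CompleteSpace H]
    (Δ : ℝ → H → EReal) (v zf : ℝ → H) (D : H → EReal) (F' : H)
    (hprox : ∀ t : ℝ, 0 < t → IsProxPt (Δ t) (v t) (zf t))
    (hzero : ∀ t : ℝ, 0 < t → Δ t 0 = 0)
    (hnb : ∀ t : ℝ, 0 < t → ∀ w, Δ t w ≠ ⊥)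
    (hconvR : ∀ t : ℝ, 0 < t → ∀ (w1 w2 : H) (r1 r2 a b : ℝ), Δ t w1 = (r1 : ℝ) →
      Δ t w2 = (r2 : ℝ) → 0 ≤ a → 0 ≤ b → a + b = 1 →
      Δ t (a • w1 + b • w2) ≤ ((a * r1 + b * r2 : ℝ) : EReal))
    (hstrong : ∀ t : ℝ, 0 < t → ∀ w : H, ∀ rz : ℝ, Δ t (zf t) = (rz : ℝ) →
      ((rz + ‖zf t - v t‖ ^ 2 / 2 + ‖w - zf t‖ ^ 2 / 4 : ℝ) : EReal)
        ≤ Δ t w + ((‖w - v t‖ ^ 2 / 2 : ℝ) : EReal))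
    (hv : Tendsto v (𝓝[>] (0:ℝ)) (𝓝 F'))
    (hlim : ∀ (z : H) (tn : ℕ → ℝ) (zn : ℕ → H), (∀ n, 0 < tn n) → Tendsto tn atTop (𝓝 0) →
      (∀ w : H, Tendsto (fun n => (⟪zn n, w⟫ : ℝ)) atTop (𝓝 ⟪z, w⟫)) →
      D z ≤ Filter.liminf (fun n => Δ (tn n) (zn n)) atTop)
    (hrec : ∀ (z : H) (tn : ℕ → ℝ), (∀ n, 0 < tn n) → Tendsto tn atTop (𝓝 0) →
      ∃ zn : ℕ → H, Tendsto zn atTop (𝓝 z) ∧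
        Filter.limsup (fun n => Δ (tn n) (zn n)) atTop ≤ D z)
    (hD : (∃ z, D z ≠ ⊤) ∧ ∀ z, D z ≠ ⊥)
    (tn : ℕ → ℝ) (htp : ∀ n, 0 < tn n) (ht0 : Tendsto tn atTop (𝓝 0)) :
    ∃ σ : ℕ → ℕ, StrictMono σ ∧ ∃ p : H,
      Tendsto (fun k => zf (tn (σ k))) atTop (𝓝 p) ∧ IsProxPt D F' p := by
  classical
  -- convergence of v along the sequence
  have htn : Tendsto tn atTop (𝓝[>] (0:ℝ)) :=
    tendsto_nhdsWithin_of_tendsto_nhds_of_eventually_within tn ht0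
      (Eventually.of_forall htp)
  have hvn : Tendsto (fun n => v (tn n)) atTop (𝓝 F') := hv.comp htn
  obtain ⟨V, hVmem⟩ : BddAbove (Set.range fun n => ‖v (tn n)‖) :=
    (hvn.norm.isBoundedUnder_le).bddAbove_range
  have hV : ∀ n, ‖v (tn n)‖ ≤ V := fun n => hVmem ⟨n, rfl⟩
  have hV0 : 0 ≤ V := le_trans (norm_nonneg _) (hV 0)
  set zn : ℕ → H := fun n => zf (tn n) with hzn
  have hproxn : ∀ n, IsProxPt (Δ (tn n)) (v (tn n)) (zn n) := fun n => hprox _ (htp n)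
  -- basic value bound
  have b1 : ∀ n, Δ (tn n) (zn n) + ((‖zn n - v (tn n)‖ ^ 2 / 2 : ℝ) : EReal)
      ≤ ((‖v (tn n)‖ ^ 2 / 2 : ℝ) : EReal) := by
    intro n
    have h := hproxn n 0
    rw [hzero _ (htp n), zero_add, zero_sub, norm_neg] at h
    exact h
  have b2 : ∀ n, ∃ ρ : ℝ, Δ (tn n) (zn n) = (ρ : EReal) := by
    intro n
    have hne : Δ (tn n) (zn n) ≠ ⊤ := by
      intro h
      have := b1 n
      rw [h, EReal.top_add_coe] at this
      exact (EReal.coe_lt_top _).not_ge this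
    exact ⟨_, (EReal.coe_toReal hne (hnb _ (htp n) _)).symm⟩
  choose ρ hρ using b2
  have b3 : ∀ n, ρ n + ‖zn n - v (tn n)‖ ^ 2 / 2 ≤ ‖v (tn n)‖ ^ 2 / 2 := by
    intro n
    have := b1 n
    rw [hρ n, ← EReal.coe_add, EReal.coe_le_coe_iff] at this
    exact this
  -- boundedness of the sequence zn
  have hbdd : ∃ Z, ∀ n, ‖zn n‖ ≤ Z := by
    by_contra hcon
    push_neg at hcon
    have hfreq : ∀ k : ℕ, ∃ᶠ n in atTop, (k : ℝ) + 1 < ‖zn n‖ := by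
      intro k
      rw [frequently_atTop]
      intro N
      have hfin : BddAbove ((fun i => ‖zn i‖) '' Set.Iio N) :=
        ((Set.finite_Iio N).image _).bddAbove
      obtain ⟨C, hC⟩ := hfin
      obtain ⟨n, hn⟩ := hcon (max C ((k : ℝ) + 1))
      refine ⟨n, ?_, lt_of_le_of_lt (le_max_right _ _) hn⟩
      by_contra hN
      push_neg at hN
      exact absurd ((hC ⟨n, hN, rfl⟩).trans (le_max_left _ _)) (not_le.2 hn)
    obtain ⟨σ, hσ, hσn⟩ := Filter.extraction_forall_of_frequently hfreq
    -- normalized vectors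
    have hσpos : ∀ k, (0:ℝ) < ‖zn (σ k)‖ := fun k =>
      lt_of_le_of_lt (by positivity) (hσn k)
    set w : ℕ → H := fun k => (‖zn (σ k)‖)⁻¹ • zn (σ k) with hw
    have hw1 : ∀ k, ‖w k‖ = 1 := by
      intro k
      rw [hw]
      rw [norm_smul, Real.norm_eq_abs, abs_of_pos (inv_pos.2 (hσpos k)),
        inv_mul_cancel₀ (hσpos k).ne']
    -- convexity bound : Δ (w k) ≤ coe (c k) with c k → -∞
    set lam : ℕ → ℝ := fun k => (‖zn (σ k)‖)⁻¹ with hlam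
    have hlam_pos : ∀ k, 0 < lam k := fun k => inv_pos.2 (hσpos k)
    have hlam_le : ∀ k, lam k ≤ 1 := by
      intro k
      rw [hlam]
      have h1 : (1:ℝ) ≤ ‖zn (σ k)‖ := by
        have h2 := hσn k
        have h3 : (0:ℝ) ≤ (k:ℝ) := Nat.cast_nonneg k
        linarith
      calc (‖zn (σ k)‖)⁻¹ ≤ 1⁻¹ := by
            exact inv_anti₀ one_pos h1
        _ = 1 := inv_one
    have hconvk : ∀ k, Δ (tn (σ k)) (w k)
        ≤ ((lam k * ρ (σ k) + (1 - lam k) * 0 : ℝ) : EReal) := by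
      intro k
      have h0 : Δ (tn (σ k)) (0 : H) = ((0:ℝ) : EReal) := by
        rw [hzero _ (htp _)]; rfl
      have := hconvR (tn (σ k)) (htp _) (zn (σ k)) 0 (ρ (σ k)) 0 (lam k) (1 - lam k)
        (hρ (σ k)) h0 (hlam_pos k).le (by linarith [hlam_le k]) (by ring)
      rwa [smul_zero, add_zero] at this
    -- quantitative bound tending to -∞
    have hcb : ∀ k, lam k * ρ (σ k) ≤ V ^ 2 / 2 + V - ((k : ℝ) + 1) / 2 := by
      intro k
      have h3 := b3 (σ k)
      have hnv : ‖v (tn (σ k))‖ ≤ V := hV _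
      have hns : ((k:ℝ)) + 1 < ‖zn (σ k)‖ := hσn k
      have hexp : ‖zn (σ k) - v (tn (σ k))‖ ^ 2
          = ‖zn (σ k)‖ ^ 2 - 2 * ⟪zn (σ k), v (tn (σ k))⟫ + ‖v (tn (σ k))‖ ^ 2 :=
        norm_sub_sq_real _ _
      have hinner : (⟪zn (σ k), v (tn (σ k))⟫ : ℝ) ≤ ‖zn (σ k)‖ * ‖v (tn (σ k))‖ :=
        real_inner_le_norm _ _
      have hlz : lam k * ‖zn (σ k)‖ = 1 := inv_mul_cancel₀ (hσpos k).ne'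
      have hρle : ρ (σ k) ≤ V ^ 2 / 2 - ‖zn (σ k)‖ ^ 2 / 2 + ‖zn (σ k)‖ * V := by
        nlinarith [sq_nonneg (‖v (tn (σ k))‖ - V), norm_nonneg (zn (σ k)),
          mul_le_mul_of_nonneg_left hnv (norm_nonneg (zn (σ k)))]
      have h5 : lam k * ρ (σ k) ≤ lam k * (V ^ 2 / 2 - ‖zn (σ k)‖ ^ 2 / 2 + ‖zn (σ k)‖ * V) :=
        mul_le_mul_of_nonneg_left hρle (hlam_pos k).le
      have h6 : lam k * (V ^ 2 / 2 - ‖zn (σ k)‖ ^ 2 / 2 + ‖zn (σ k)‖ * V)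
          = lam k * V ^ 2 / 2 - ‖zn (σ k)‖ / 2 + V := by
        linear_combination (-‖zn (σ k)‖ / 2 + V) * hlz
      have h9 : lam k * V ^ 2 ≤ V ^ 2 := by
        nlinarith [hlam_le k, sq_nonneg V, hlam_pos k]
      linarith [h5, h6.le, h6.ge, h9, hσn k]
    -- weak limit of the normalized vectors gives D = ⊥, contradiction
    obtain ⟨φ, hφ, zb, hzb⟩ := exists_weak_subseq w 1 (fun k => (hw1 k).le)
    have hDzb := hlim zb (fun k => tn (σ (φ k))) (fun k => w (φ k))
      (fun k => htp _) (ht0.comp ((hσ.comp hφ).tendsto_atTop)) hzb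
    have hub : ∀ k, Δ (tn (σ (φ k))) (w (φ k))
        ≤ ((V ^ 2 / 2 + V - ((φ k : ℝ) + 1) / 2 : ℝ) : EReal) := by
      intro k
      refine (hconvk (φ k)).trans ?_
      rw [EReal.coe_le_coe_iff]
      have := hcb (φ k)
      linarith
    have hliminf_le : Filter.liminf (fun k => Δ (tn (σ (φ k))) (w (φ k))) atTop
        ≤ Filter.liminf (fun k => ((V ^ 2 / 2 + V - ((φ k : ℝ) + 1) / 2 : ℝ) : EReal)) atTop :=
      Filter.liminf_le_liminf (Eventually.of_forall hub)
    have hbotlim : Tendsto (fun k => ((V ^ 2 / 2 + V - ((φ k : ℝ) + 1) / 2 : ℝ) : EReal))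
        atTop (𝓝 ⊥) := by
      rw [EReal.tendsto_nhds_bot_iff_real]
      intro x
      have hg1 : Tendsto (fun k : ℕ => ((k : ℝ) + 1) / 2) atTop atTop :=
        (tendsto_atTop_add_const_right atTop 1 (tendsto_natCast_atTop_atTop (R := ℝ))).atTop_div_const
          (by norm_num)
      have hg2 : Tendsto (fun k : ℕ => V ^ 2 / 2 + V + -(((k : ℝ) + 1) / 2)) atTop atBot :=
        tendsto_atBot_add_const_left atTop _ (tendsto_neg_atTop_atBot.comp hg1)
      have hgb : Tendsto (fun k => V ^ 2 / 2 + V - ((φ k : ℝ) + 1) / 2) atTop atBot := by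
        refine tendsto_atBot_mono (fun k => ?_) (hg2.comp hφ.tendsto_atTop)
        simp only [Function.comp]
        have hck : (k : ℝ) ≤ (φ k : ℝ) := Nat.cast_le.2 hφ.le_apply
        linarith
      filter_upwards [hgb.eventually (eventually_lt_atBot x)] with k hk
      exact_mod_cast EReal.coe_lt_coe_iff.2 hk
    have hbot : D zb = ⊥ := by
      have := hDzb.trans (hliminf_le.trans_eq hbotlim.liminf_eq)
      exact le_bot_iff.1 this
    exact hD.2 zb hbot
  obtain ⟨Z, hZ⟩ := hbdd
  obtain ⟨σ, hσ, zb, hzb⟩ := exists_weak_subseq zn Z hZ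
  set vσ : ℕ → H := fun k => v (tn (σ k)) with hvσ
  have hvσc : Tendsto vσ atTop (𝓝 F') := hvn.comp hσ.tendsto_atTop
  have htσp : ∀ k, 0 < tn (σ k) := fun k => htp _
  have htσ0 : Tendsto (fun k => tn (σ k)) atTop (𝓝 0) := ht0.comp hσ.tendsto_atTop
  set cF : ℝ := ‖zb - F'‖ ^ 2 / 2 with hcF
  have hA : D zb ≤ Filter.liminf (fun k => Δ (tn (σ k)) (zn (σ k))) atTop :=
    hlim zb _ _ htσp htσ0 (fun w => hzb w)
  set c : ℕ → ℝ := fun k => ⟪zn (σ k) - vσ k, zb - F'⟫ - cF with hc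
  have hctend : Tendsto c atTop (𝓝 cF) := by
    have h1 : Tendsto (fun k => (⟪zn (σ k), zb - F'⟫ : ℝ)) atTop (𝓝 ⟪zb, zb - F'⟫) := hzb _
    have h2 : Tendsto (fun k => (⟪vσ k, zb - F'⟫ : ℝ)) atTop (𝓝 ⟪F', zb - F'⟫) :=
      hvσc.inner tendsto_const_nhds
    have h3 : ∀ k, c k = ⟪zn (σ k), zb - F'⟫ - ⟪vσ k, zb - F'⟫ - cF := by
      intro k; rw [hc]; simp only [inner_sub_left]
    have h5 : (⟪zb, zb - F'⟫ : ℝ) - ⟪F', zb - F'⟫ - cF = cF := by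
      rw [← inner_sub_left, real_inner_self_eq_norm_sq, hcF]; ring
    have h6 := (h1.sub h2).sub_const cF
    rw [h5] at h6
    exact h6.congr fun k => (h3 k).symm
  have hqc : ∀ k, c k ≤ ‖zn (σ k) - vσ k‖ ^ 2 / 2 := by
    intro k
    rw [hc, hcF]
    nlinarith [norm_sub_sq_real (zn (σ k) - vσ k) (zb - F'),
      sq_nonneg ‖zn (σ k) - vσ k - (zb - F')‖]
  have hΦlow : D zb + ((cF : ℝ) : EReal) ≤
      Filter.liminf (fun k => Δ (tn (σ k)) (zn (σ k))
        + ((‖zn (σ k) - vσ k‖ ^ 2 / 2 : ℝ) : EReal)) atTop := by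
    have step3 : Filter.liminf (fun k => ((c k : ℝ) : EReal)) atTop = ((cF : ℝ) : EReal) :=
      (EReal.tendsto_coe.2 hctend).liminf_eq
    have step2 : Filter.liminf (fun k => Δ (tn (σ k)) (zn (σ k))) atTop
          + Filter.liminf (fun k => ((c k : ℝ) : EReal)) atTop
        ≤ Filter.liminf (fun k => Δ (tn (σ k)) (zn (σ k)) + ((c k : ℝ) : EReal)) atTop :=
      EReal.le_liminf_add
    have step1 : Filter.liminf (fun k => Δ (tn (σ k)) (zn (σ k)) + ((c k : ℝ) : EReal)) atTop
        ≤ Filter.liminf (fun k => Δ (tn (σ k)) (zn (σ k))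
          + ((‖zn (σ k) - vσ k‖ ^ 2 / 2 : ℝ) : EReal)) atTop :=
      Filter.liminf_le_liminf (Eventually.of_forall fun k =>
        add_le_add_right (EReal.coe_le_coe_iff.2 (hqc k)) _)
    calc D zb + ((cF : ℝ) : EReal)
        ≤ Filter.liminf (fun k => Δ (tn (σ k)) (zn (σ k))) atTop
          + Filter.liminf (fun k => ((c k : ℝ) : EReal)) atTop :=
          add_le_add hA (le_of_eq step3.symm)
      _ ≤ _ := step2.trans step1
  have hupper : ∀ y : H, D zb + ((cF : ℝ) : EReal)
      ≤ D y + ((‖y - F'‖ ^ 2 / 2 : ℝ) : EReal) := by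
    intro y
    obtain ⟨wy, hwyc, hwyl⟩ := hrec y (fun k => tn (σ k)) htσp htσ0
    have hmin : ∀ k, Δ (tn (σ k)) (zn (σ k)) + ((‖zn (σ k) - vσ k‖ ^ 2 / 2 : ℝ) : EReal)
        ≤ Δ (tn (σ k)) (wy k) + ((‖wy k - vσ k‖ ^ 2 / 2 : ℝ) : EReal) := fun k =>
      hproxn (σ k) (wy k)
    have hnormc : Tendsto (fun k => ((‖wy k - vσ k‖ ^ 2 / 2 : ℝ) : EReal)) atTop
        (𝓝 ((‖y - F'‖ ^ 2 / 2 : ℝ) : EReal)) := by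
      refine EReal.tendsto_coe.2 ?_
      exact (((hwyc.sub hvσc).norm.pow 2).div_const 2)
    have hlimsup_le : Filter.limsup (fun k => Δ (tn (σ k)) (wy k)
          + ((‖wy k - vσ k‖ ^ 2 / 2 : ℝ) : EReal)) atTop
        ≤ D y + ((‖y - F'‖ ^ 2 / 2 : ℝ) : EReal) := by
      have hv2 : Filter.limsup (fun k => ((‖wy k - vσ k‖ ^ 2 / 2 : ℝ) : EReal)) atTop
          = ((‖y - F'‖ ^ 2 / 2 : ℝ) : EReal) := hnormc.limsup_eq
      have hadd := EReal.limsup_add_le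
        (u := fun k => Δ (tn (σ k)) (wy k))
        (v := fun k => ((‖wy k - vσ k‖ ^ 2 / 2 : ℝ) : EReal)) (f := atTop)
        (Or.inr (by rw [hv2]; exact EReal.coe_ne_top _))
        (Or.inr (by rw [hv2]; exact EReal.coe_ne_bot _))
      refine hadd.trans ?_
      rw [hv2]
      exact add_le_add_left hwyl _
    calc D zb + ((cF : ℝ) : EReal)
        ≤ Filter.liminf (fun k => Δ (tn (σ k)) (zn (σ k))
          + ((‖zn (σ k) - vσ k‖ ^ 2 / 2 : ℝ) : EReal)) atTop := hΦlow
      _ ≤ Filter.liminf (fun k => Δ (tn (σ k)) (wy k)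
          + ((‖wy k - vσ k‖ ^ 2 / 2 : ℝ) : EReal)) atTop :=
          Filter.liminf_le_liminf (Eventually.of_forall hmin)
      _ ≤ Filter.limsup (fun k => Δ (tn (σ k)) (wy k)
          + ((‖wy k - vσ k‖ ^ 2 / 2 : ℝ) : EReal)) atTop := Filter.liminf_le_limsup
      _ ≤ _ := hlimsup_le
  obtain ⟨z₀, hz₀⟩ := hD.1
  have hDzbt : D zb ≠ ⊤ := by
    intro htop
    have h := hupper z₀
    rw [htop, EReal.top_add_coe, ← EReal.coe_toReal hz₀ (hD.2 z₀), ← EReal.coe_add] at h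
    exact (EReal.coe_lt_top _).not_ge h
  set rD : ℝ := (D zb).toReal with hrD
  have hDc : D zb = (rD : EReal) := (EReal.coe_toReal hDzbt (hD.2 zb)).symm
  -- strong convergence via the recovery sequence at zb
  obtain ⟨ws, hwsc, hwsl⟩ := hrec zb (fun k => tn (σ k)) htσp htσ0
  have hnormc2 : Tendsto (fun k => ((‖ws k - vσ k‖ ^ 2 / 2 : ℝ) : EReal)) atTop
      (𝓝 ((cF : ℝ) : EReal)) := by
    rw [hcF]
    exact EReal.tendsto_coe.2 (((hwsc.sub hvσc).norm.pow 2).div_const 2)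
  have hRlimsup : Filter.limsup (fun k => Δ (tn (σ k)) (ws k)
      + ((‖ws k - vσ k‖ ^ 2 / 2 : ℝ) : EReal)) atTop ≤ ((rD + cF : ℝ) : EReal) := by
    have hv2 : Filter.limsup (fun k => ((‖ws k - vσ k‖ ^ 2 / 2 : ℝ) : EReal)) atTop
        = ((cF : ℝ) : EReal) := hnormc2.limsup_eq
    have hadd := EReal.limsup_add_le
      (u := fun k => Δ (tn (σ k)) (ws k))
      (v := fun k => ((‖ws k - vσ k‖ ^ 2 / 2 : ℝ) : EReal)) (f := atTop)
      (Or.inr (by rw [hv2]; exact EReal.coe_ne_top _))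
      (Or.inr (by rw [hv2]; exact EReal.coe_ne_bot _))
    refine hadd.trans ?_
    rw [hv2, EReal.coe_add]
    exact add_le_add_left (hwsl.trans_eq hDc) _
  set Φr : ℕ → ℝ := fun k => ρ (σ k) + ‖zn (σ k) - vσ k‖ ^ 2 / 2 with hΦr
  have hΦrlow : ((rD + cF : ℝ) : EReal)
      ≤ Filter.liminf (fun k => ((Φr k : ℝ) : EReal)) atTop := by
    have heq : (fun k => Δ (tn (σ k)) (zn (σ k))
        + ((‖zn (σ k) - vσ k‖ ^ 2 / 2 : ℝ) : EReal)) = fun k => ((Φr k : ℝ) : EReal) := by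
      funext k
      rw [hρ (σ k), ← EReal.coe_add, hΦr]
    have h := hΦlow
    rw [heq, hDc, ← EReal.coe_add] at h
    exact h
  set dk : ℕ → ℝ := fun k => ‖ws k - zn (σ k)‖ ^ 2 / 4 with hdk
  have hstrongk : ∀ k, ((Φr k + dk k : ℝ) : EReal)
      ≤ Δ (tn (σ k)) (ws k) + ((‖ws k - vσ k‖ ^ 2 / 2 : ℝ) : EReal) := by
    intro k
    have h := hstrong (tn (σ k)) (htp _) (ws k) (ρ (σ k)) (hρ (σ k))
    have heq : (Φr k + dk k : ℝ)
        = ρ (σ k) + ‖zf (tn (σ k)) - v (tn (σ k))‖ ^ 2 / 2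
          + ‖ws k - zf (tn (σ k))‖ ^ 2 / 4 := by
      rw [hΦr, hdk]
    rw [heq]
    exact h
  have hlimsup_dk : Filter.limsup (fun k => ((dk k : ℝ) : EReal)) atTop ≤ (0 : EReal) := by
    have heq : (fun k => ((dk k : ℝ) : EReal))
        = fun k => ((Φr k + dk k : ℝ) : EReal) + ((- Φr k : ℝ) : EReal) := by
      funext k
      rw [← EReal.coe_add]
      congr 1
      ring
    have hu : Filter.limsup (fun k => ((Φr k + dk k : ℝ) : EReal)) atTop
        ≤ ((rD + cF : ℝ) : EReal) :=
      (Filter.limsup_le_limsup (Eventually.of_forall hstrongk)).trans hRlimsup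
    have hvneg : Filter.limsup (fun k => ((- Φr k : ℝ) : EReal)) atTop
        ≤ -((rD + cF : ℝ) : EReal) := by
      have h1 : (fun k => ((- Φr k : ℝ) : EReal)) = fun k => -((Φr k : ℝ) : EReal) := by
        funext k; rw [EReal.coe_neg]
      rw [h1]
      have h2 : Filter.limsup (fun k => -((Φr k : ℝ) : EReal)) atTop
          = - Filter.liminf (fun k => ((Φr k : ℝ) : EReal)) atTop := by
        exact EReal.limsup_neg
      rw [h2]
      exact EReal.neg_le_neg_iff.2 hΦrlow
    have hadd := EReal.limsup_add_le
      (u := fun k => ((Φr k + dk k : ℝ) : EReal))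
      (v := fun k => ((- Φr k : ℝ) : EReal)) (f := atTop)
      (Or.inr (by
        refine ne_of_lt (lt_of_le_of_lt hvneg ?_)
        rw [← EReal.coe_neg]; exact EReal.coe_lt_top _))
      (Or.inl (ne_of_lt (lt_of_le_of_lt hu (EReal.coe_lt_top _))))
    rw [heq]
    refine hadd.trans ?_
    calc Filter.limsup (fun k => ((Φr k + dk k : ℝ) : EReal)) atTop
          + Filter.limsup (fun k => ((- Φr k : ℝ) : EReal)) atTop
        ≤ ((rD + cF : ℝ) : EReal) + -((rD + cF : ℝ) : EReal) := add_le_add hu hvneg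
      _ = (0 : EReal) := by
          rw [← EReal.coe_neg, ← EReal.coe_add]
          norm_cast
          ring
  have hd0 : Tendsto dk atTop (𝓝 0) := by
    refine tendsto_order.2 ⟨fun a ha => Eventually.of_forall fun k => lt_of_lt_of_le ha
      (by rw [hdk]; positivity), fun a ha => ?_⟩
    have h1 : Filter.limsup (fun k => ((dk k : ℝ) : EReal)) atTop < ((a : ℝ) : EReal) :=
      lt_of_le_of_lt hlimsup_dk (by exact_mod_cast ha)
    filter_upwards [Filter.eventually_lt_of_limsup_lt h1] with k hk
    exact_mod_cast hk
  have hnormsq : Tendsto (fun k => ‖ws k - zn (σ k)‖ ^ 2) atTop (𝓝 0) := by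
    have h := hd0.const_mul 4
    rw [mul_zero] at h
    refine h.congr fun k => ?_
    ring
  have hnorm0 : Tendsto (fun k => ws k - zn (σ k)) atTop (𝓝 0) := by
    rw [tendsto_zero_iff_norm_tendsto_zero]
    have h := (Real.continuous_sqrt.tendsto 0).comp hnormsq
    rw [Real.sqrt_zero] at h
    refine h.congr fun k => ?_
    simp only [Function.comp]
    rw [Real.sqrt_sq (norm_nonneg _)]
  have hzconv : Tendsto (fun k => zn (σ k)) atTop (𝓝 zb) := by
    have h := hwsc.sub hnorm0
    rw [sub_zero] at h
    refine h.congr fun k => ?_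
    abel
  refine ⟨σ, hσ, zb, hzconv, fun y => ?_⟩
  have h := hupper y
  rwa [hcF] at h

lemma master {H : Type*} [NormedAddCommGroup H] [InnerProductSpace ℝ H] [CompleteSpace H]
    (Δ : ℝ → H → EReal) (v zf : ℝ → H) (D : H → EReal) (F' : H)
    (hprox : ∀ t : ℝ, 0 < t → IsProxPt (Δ t) (v t) (zf t))
    (hzero : ∀ t : ℝ, 0 < t → Δ t 0 = 0)
    (hnb : ∀ t : ℝ, 0 < t → ∀ w, Δ t w ≠ ⊥)
    (hconvR : ∀ t : ℝ, 0 < t → ∀ (w1 w2 : H) (r1 r2 a b : ℝ), Δ t w1 = (r1 : ℝ) →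
      Δ t w2 = (r2 : ℝ) → 0 ≤ a → 0 ≤ b → a + b = 1 →
      Δ t (a • w1 + b • w2) ≤ ((a * r1 + b * r2 : ℝ) : EReal))
    (hstrong : ∀ t : ℝ, 0 < t → ∀ w : H, ∀ rz : ℝ, Δ t (zf t) = (rz : ℝ) →
      ((rz + ‖zf t - v t‖ ^ 2 / 2 + ‖w - zf t‖ ^ 2 / 4 : ℝ) : EReal)
        ≤ Δ t w + ((‖w - v t‖ ^ 2 / 2 : ℝ) : EReal))
    (hv : Tendsto v (𝓝[>] (0:ℝ)) (𝓝 F'))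
    (hlim : ∀ (z : H) (tn : ℕ → ℝ) (zn : ℕ → H), (∀ n, 0 < tn n) → Tendsto tn atTop (𝓝 0) →
      (∀ w : H, Tendsto (fun n => (⟪zn n, w⟫ : ℝ)) atTop (𝓝 ⟪z, w⟫)) →
      D z ≤ Filter.liminf (fun n => Δ (tn n) (zn n)) atTop)
    (hrec : ∀ (z : H) (tn : ℕ → ℝ), (∀ n, 0 < tn n) → Tendsto tn atTop (𝓝 0) →
      ∃ zn : ℕ → H, Tendsto zn atTop (𝓝 z) ∧
        Filter.limsup (fun n => Δ (tn n) (zn n)) atTop ≤ D z)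
    (hD : (∃ z, D z ≠ ⊤) ∧ ∀ z, D z ≠ ⊥) :
    ∃ p : H, Tendsto zf (𝓝[>] (0:ℝ)) (𝓝 p) ∧ IsProxPt D F' p := by
  classical
  set t0 : ℕ → ℝ := fun n => 1 / ((n : ℝ) + 1) with ht0def
  have ht0p : ∀ n, 0 < t0 n := fun n => by rw [ht0def]; positivity
  have ht00 : Tendsto t0 atTop (𝓝 0) := tendsto_one_div_add_atTop_nhds_zero_nat
  -- midpoint inequality for D at finite points
  have hDmid : ∀ (p q : H) (rp rq : ℝ), D p = (rp : ℝ) → D q = (rq : ℝ) →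
      D ((1/2 : ℝ) • p + (1/2 : ℝ) • q) ≤ ((rp / 2 + rq / 2 : ℝ) : EReal) := by
    intro p q rp rq hp hq
    obtain ⟨an, hanc, hanl⟩ := hrec p t0 ht0p ht00
    obtain ⟨bn, hbnc, hbnl⟩ := hrec q t0 ht0p ht00
    refine ereal_le_coe_of_forall_eps fun ε hε => ?_
    have hea : ∀ᶠ n in atTop, Δ (t0 n) (an n) < ((rp + ε : ℝ) : EReal) :=
      Filter.eventually_lt_of_limsup_lt (lt_of_le_of_lt hanl
        (by rw [hp]; exact_mod_cast lt_add_of_pos_right rp hε))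
    have heb : ∀ᶠ n in atTop, Δ (t0 n) (bn n) < ((rq + ε : ℝ) : EReal) :=
      Filter.eventually_lt_of_limsup_lt (lt_of_le_of_lt hbnl
        (by rw [hq]; exact_mod_cast lt_add_of_pos_right rq hε))
    have hmc : Tendsto (fun n => (1/2 : ℝ) • an n + (1/2 : ℝ) • bn n) atTop
        (𝓝 ((1/2 : ℝ) • p + (1/2 : ℝ) • q)) :=
      (hanc.const_smul _).add (hbnc.const_smul _)
    have hm := hlim ((1/2 : ℝ) • p + (1/2 : ℝ) • q) t0
      (fun n => (1/2 : ℝ) • an n + (1/2 : ℝ) • bn n) ht0p ht00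
      (fun w => hmc.inner tendsto_const_nhds)
    refine hm.trans ?_
    refine Filter.liminf_le_of_frequently_le (Eventually.frequently ?_)
    filter_upwards [hea, heb] with n ha hb
    have hat : Δ (t0 n) (an n) ≠ ⊤ := ha.ne_top
    have hbt : Δ (t0 n) (bn n) ≠ ⊤ := hb.ne_top
    have hrac : Δ (t0 n) (an n) = ((Δ (t0 n) (an n)).toReal : EReal) :=
      (EReal.coe_toReal hat (hnb _ (ht0p n) _)).symm
    have hrbc : Δ (t0 n) (bn n) = ((Δ (t0 n) (bn n)).toReal : EReal) :=
      (EReal.coe_toReal hbt (hnb _ (ht0p n) _)).symm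
    have hralt : (Δ (t0 n) (an n)).toReal < rp + ε := by
      rw [hrac] at ha; exact_mod_cast ha
    have hrblt : (Δ (t0 n) (bn n)).toReal < rq + ε := by
      rw [hrbc] at hb; exact_mod_cast hb
    have hcv := hconvR (t0 n) (ht0p n) (an n) (bn n) _ _ (1/2) (1/2) hrac hrbc
      (by norm_num) (by norm_num) (by norm_num)
    refine hcv.trans ?_
    rw [EReal.coe_le_coe_iff]
    linarith
  -- uniqueness of proximal points of D
  have huniq : ∀ p q : H, IsProxPt D F' p → IsProxPt D F' q → p = q := by
    intro p q hp hq
    obtain ⟨z₀, hz₀⟩ := hD.1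
    have hfin : ∀ x : H, IsProxPt D F' x → D x ≠ ⊤ := by
      intro x hx htop
      have h := hx z₀
      rw [htop, EReal.top_add_coe, ← EReal.coe_toReal hz₀ (hD.2 z₀), ← EReal.coe_add] at h
      exact (EReal.coe_lt_top _).not_ge h
    have hpc : D p = ((D p).toReal : EReal) := (EReal.coe_toReal (hfin p hp) (hD.2 p)).symm
    have hqc : D q = ((D q).toReal : EReal) := (EReal.coe_toReal (hfin q hq) (hD.2 q)).symm
    set rp := (D p).toReal
    set rq := (D q).toReal
    have hmid := hDmid p q rp rq hpc hqc
    set m : H := (1/2 : ℝ) • p + (1/2 : ℝ) • q with hm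
    have h1 : rp + ‖p - F'‖ ^ 2 / 2 ≤ rp / 2 + rq / 2 + ‖m - F'‖ ^ 2 / 2 := by
      have h := (hp m).trans (add_le_add_left hmid _)
      rw [hpc, ← EReal.coe_add, ← EReal.coe_add, EReal.coe_le_coe_iff] at h
      linarith
    have h2 : rq + ‖q - F'‖ ^ 2 / 2 ≤ rp / 2 + rq / 2 + ‖m - F'‖ ^ 2 / 2 := by
      have h := (hq m).trans (add_le_add_left hmid _)
      rw [hqc, ← EReal.coe_add, ← EReal.coe_add, EReal.coe_le_coe_iff] at h
      linarith
    have emid : m - F' = (1/2 : ℝ) • ((p - F') + (q - F')) := by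
      rw [hm, smul_add, smul_sub, smul_sub]
      have hv2 : (1/2 : ℝ) • F' + (1/2 : ℝ) • F' = F' := by
        rw [← add_smul]; norm_num
      conv_lhs => rw [show F' = (1/2 : ℝ) • F' + (1/2 : ℝ) • F' from hv2.symm]
      abel
    have n1 : ‖m - F'‖ ^ 2
        = (1/4) * (‖p - F'‖ ^ 2 + 2 * ⟪p - F', q - F'⟫ + ‖q - F'‖ ^ 2) := by
      rw [emid, norm_smul, Real.norm_eq_abs, mul_pow, norm_add_sq_real]
      norm_num
    have n2 : ‖p - q‖ ^ 2 = ‖p - F'‖ ^ 2 - 2 * ⟪p - F', q - F'⟫ + ‖q - F'‖ ^ 2 := by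
      have h : p - q = (p - F') - (q - F') := by abel
      rw [h, norm_sub_sq_real]
    have hle : ‖p - q‖ ^ 2 ≤ 0 := by nlinarith [h1, h2, n1, n2]
    have hz : ‖p - q‖ = 0 := by
      have := sq_nonneg ‖p - q‖
      have h0 : ‖p - q‖ ^ 2 = 0 := le_antisymm hle (by positivity)
      exact pow_eq_zero_iff two_ne_zero |>.1 h0
    exact sub_eq_zero.1 (norm_eq_zero.1 hz)
  obtain ⟨σ₀, hσ₀, p₀, hp₀c, hp₀⟩ := seq_core Δ v zf D F' hprox hzero hnb hconvR hstrong hv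
    hlim hrec hD t0 ht0p ht00
  refine ⟨p₀, ?_, hp₀⟩
  refine Filter.tendsto_of_subseq_tendsto fun ns hns => ?_
  have hpos : ∀ᶠ n in atTop, 0 < ns n := by
    have := hns.eventually_mem self_mem_nhdsWithin
    filter_upwards [this] with n hn
    exact hn
  set ns' : ℕ → ℝ := fun n => if 0 < ns n then ns n else t0 n with hns'
  have hns'p : ∀ n, 0 < ns' n := by
    intro n
    rw [hns']
    by_cases h : 0 < ns n
    · simpa [h] using h
    · simpa [h] using ht0p n
  have hns'0 : Tendsto ns' atTop (𝓝 0) := by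
    refine Tendsto.congr' ?_ (hns.mono_right nhdsWithin_le_nhds)
    filter_upwards [hpos] with n hn
    simp only [hns', if_pos hn]
  obtain ⟨σ, hσm, p, hpc, hpp⟩ := seq_core Δ v zf D F' hprox hzero hnb hconvR hstrong hv
    hlim hrec hD ns' hns'p hns'0
  have hpeq : p = p₀ := huniq p p₀ hpp hp₀
  refine ⟨σ, ?_⟩
  have hev : ∀ᶠ k in atTop, zf (ns' (σ k)) = zf (ns (σ k)) := by
    filter_upwards [hσm.tendsto_atTop.eventually hpos] with k hk
    simp only [hns', if_pos hk]
  exact Tendsto.congr' hev (hpeq ▸ hpc)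


/-- Sensitivity of a parameterized proximal point under twice epi-differentiability: if
`u(t) = prox_{Ψ(t,·)}(F(t))`, `F` is differentiable at `t = 0⁺` with derivative `F'`,
`F(0) - u(0) ∈ ∂Ψ(0,·)(u(0))`, and `Ψ` is twice epi-differentiable at `u(0)` for
`F(0) - u(0)` (the second-order quotients Mosco epi-converge, encoded by the weak-liminf
inequality and the strong recovery-sequence condition) with a proper second-order
epi-derivative `D`, then `u` is differentiable at `t = 0⁺` and `u'(0) = prox_D(F')`. -/
theorem stmt_12 {H : Type*} [NormedAddCommGroup H] [InnerProductSpace ℝ H] [CompleteSpace H]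
    (Ψ : ℝ → H → EReal)
    (hproper : ∀ t ≥ (0 : ℝ), (∃ z, Ψ t z ≠ ⊤) ∧ ∀ z, Ψ t z ≠ ⊥)
    (hlsc : ∀ t ≥ (0 : ℝ), LowerSemicontinuous (Ψ t))
    (hconv : ∀ t ≥ (0 : ℝ), ∀ u v : H, ∀ a b : ℝ, 0 ≤ a → 0 ≤ b → a + b = 1 →
      Ψ t (a • u + b • v) ≤ (a : EReal) * Ψ t u + (b : EReal) * Ψ t v)
    (F u : ℝ → H)
    (hu : ∀ t ≥ (0 : ℝ), IsProxPt (Ψ t) (F t) (u t))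
    (F' : H) (hF' : Tendsto (fun t : ℝ => t⁻¹ • (F t - F 0)) (𝓝[>] 0) (𝓝 F'))
    (hdom : ∀ t ≥ (0 : ℝ), Ψ t (u 0) ≠ ⊤)
    (hsub : ∀ z : H, ((⟪F 0 - u 0, z - u 0⟫ : ℝ) : EReal) + Ψ 0 (u 0) ≤ Ψ 0 z)
    (D : H → EReal)
    (hliminf : ∀ (z : H) (tn : ℕ → ℝ) (zn : ℕ → H), (∀ n, 0 < tn n) →
      Tendsto tn atTop (𝓝 0) →
      (∀ w : H, Tendsto (fun n => (⟪zn n, w⟫ : ℝ)) atTop (𝓝 ⟪z, w⟫)) →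
      D z ≤ Filter.liminf (fun n => secondQuot Ψ (u 0) (F 0 - u 0) (tn n) (zn n)) atTop)
    (hrecover : ∀ (z : H) (tn : ℕ → ℝ), (∀ n, 0 < tn n) → Tendsto tn atTop (𝓝 0) →
      ∃ zn : ℕ → H, Tendsto zn atTop (𝓝 z) ∧
        Filter.limsup (fun n => secondQuot Ψ (u 0) (F 0 - u 0) (tn n) (zn n)) atTop ≤ D z)
    (hDproper : (∃ z, D z ≠ ⊤) ∧ ∀ z, D z ≠ ⊥) :
    ∃ u' : H, Tendsto (fun t : ℝ => t⁻¹ • (u t - u 0)) (𝓝[>] 0) (𝓝 u') ∧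
      IsProxPt D F' u' := by
  have hproxΔ : ∀ t : ℝ, 0 < t → IsProxPt (secondQuot Ψ (u 0) (F 0 - u 0) t)
      (t⁻¹ • (F t - F 0)) (t⁻¹ • (u t - u 0)) := fun t ht =>
    prox_quot Ψ (u 0) (F 0 - u 0) t ht ((hproper t ht.le).2) (hdom t ht.le) rfl (hu t ht.le)
  exact master (secondQuot Ψ (u 0) (F 0 - u 0)) (fun t => t⁻¹ • (F t - F 0))
    (fun t => t⁻¹ • (u t - u 0)) D F'
    hproxΔ
    (fun t ht => quot_zero Ψ (u 0) (F 0 - u 0) t ht (hdom t ht.le) ((hproper t ht.le).2 _))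
    (fun t ht w => quot_ne_bot Ψ (u 0) (F 0 - u 0) t ht ((hproper t ht.le).2 _))
    (fun t ht w1 w2 r1 r2 a b h1 h2 ha hb hab =>
      quot_conv_real Ψ (u 0) (F 0 - u 0) t ht (hconv t ht.le) ((hproper t ht.le).2)
        h1 h2 ha hb hab)
    (fun t ht w rz hrz =>
      prox_strong Ψ (u 0) (F 0 - u 0) t ht (hconv t ht.le) ((hproper t ht.le).2)
        (hproxΔ t ht) hrz w)
    hF' hliminf hrecover hDproper
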